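/- Let f₁, …, f_{d₀}, g₁, …, g_{r₀} be vector fields such that D = (f₁,…,f_{d₀}) and D^(1) = (f₁,…,f_{d₀}, g₁,…,g_{r₀}) have constant ranks, and let c^k_{ij} be structure functions defined by [f_i, f_j] = Σ_{k=1}^{r₀} c^k_{ij} g_k mod D. If the distribution D has constant Engel rank 1 and d₀ ≥ 4, then for all 1 ≤ i < j < k < l ≤ d₀ and 1 ≤ p, q ≤ r₀: c^p_{ij} c^q_{kl} − c^p_{ik} c^q_{jl} + c^p_{il} c^q_{jk} + c^p_{jk} c^q_{il} − c^p_{jl} c^q_{ik} + c^p_{kl} c^q_{ij} = 0. -/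

import Mathlib

open scoped BigOperators
open Matrix

noncomputable section

/-- A (rough) vector field on `ι → ℝ`. -/
abbrev VF (ι : Type) [Fintype ι] := (ι → ℝ) → (ι → ℝ)

/-- Lie bracket of vector fields on `ι → ℝ`. -/
def lieB {ι : Type} [Fintype ι] (f g : VF ι) : VF ι :=
  fun x => fderiv ℝ g x (f x) - fderiv ℝ f x (g x)

/-- A distribution: a module of vector fields over the ring of functions. -/
abbrev Distr (ι : Type) [Fintype ι] := Submodule ((ι → ℝ) → ℝ) (VF ι)

/-- Fiber at a point of a set of vector fields: the linear span of their values. -/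
def fiberS {ι : Type} [Fintype ι] (S : Set (VF ι)) (p : ι → ℝ) : Submodule ℝ (ι → ℝ) :=
  Submodule.span ℝ {v | ∃ f ∈ S, f p = v}

/-- Fiber of a distribution at a point. -/
def fiber {ι : Type} [Fintype ι] (D : Distr ι) (p : ι → ℝ) : Submodule ℝ (ι → ℝ) :=
  fiberS (D : Set (VF ι)) p

/-- All brackets of elements of `A` with elements of `B`. -/
def bracketSet {ι : Type} [Fintype ι] (A B : Set (VF ι)) : Set (VF ι) :=
  {h | ∃ f ∈ A, ∃ g ∈ B, h = lieB f g}

/-- One step of the derived flag: `D + [D, D]`. -/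
def derivedStep {ι : Type} [Fintype ι] (D : Distr ι) : Distr ι :=
  D ⊔ Submodule.span _ (bracketSet (D : Set (VF ι)) (D : Set (VF ι)))

/-- The derived flag `D⁽⁰⁾ = D`, `D⁽ⁱ⁺¹⁾ = D⁽ⁱ⁾ + [D⁽ⁱ⁾, D⁽ⁱ⁾]`. -/
def derived {ι : Type} [Fintype ι] (D : Distr ι) : ℕ → Distr ι
  | 0 => D
  | k + 1 => derivedStep (derived D k)

/-- Characteristic vector fields of `D`: `f ∈ D` with `[f, D] ⊆ D`. -/
def charSet {ι : Type} [Fintype ι] (D : Distr ι) : Set (VF ι) :=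
  {f | f ∈ D ∧ ∀ g ∈ D, lieB f g ∈ D}

/-- Involutivity of a distribution. -/
def IsInvolutive {ι : Type} [Fintype ι] (L : Distr ι) : Prop :=
  ∀ f ∈ L, ∀ g ∈ L, lieB f g ∈ L

/-- A smooth distribution: all its members are smooth vector fields. -/
def SmoothDist {ι : Type} [Fintype ι] (D : Distr ι) : Prop :=
  ∀ f ∈ D, ContDiff ℝ (⊤ : ℕ∞) f

/-- `dω(f, g) = L_f(ω(g)) − L_g(ω(f)) − ω([f, g])` for a 1-form `ω` (given by its
coefficient covector field) and vector fields `f, g`. -/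
def dOm {ι : Type} [Fintype ι] (ω : (ι → ℝ) → (ι → ℝ)) (f g : VF ι) : (ι → ℝ) → ℝ :=
  fun x => fderiv ℝ (fun y => ω y ⬝ᵥ g y) x (f x)
    - fderiv ℝ (fun y => ω y ⬝ᵥ f y) x (g x)
    - ω x ⬝ᵥ lieB f g x

/-- `ω` annihilates the distribution `D`. -/
def Annihilates {ι : Type} [Fintype ι] (ω : (ι → ℝ) → (ι → ℝ)) (D : Distr ι) : Prop :=
  ∀ f ∈ D, ∀ x : ι → ℝ, ω x ⬝ᵥ f x = 0


lemma aux_dot_sum {ι κ : Type} [Fintype ι] [Fintype κ] (u : ι → ℝ) (c : κ → ℝ)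
    (v : κ → ι → ℝ) : u ⬝ᵥ (∑ m, c m • v m) = ∑ m, c m * (u ⬝ᵥ v m) := by
  simp only [dotProduct, Finset.sum_apply, Pi.smul_apply, smul_eq_mul,
    Finset.mul_sum]
  rw [Finset.sum_comm]
  congr 1; funext m; congr 1; funext i; ring

lemma aux_exists_cov {ι : Type} [Fintype ι] {κ : Type} [Fintype κ] (v : κ → (ι → ℝ))
    (hv : LinearIndependent ℝ v) (u : κ → ℝ) :
    ∃ ω₀ : ι → ℝ, ∀ s, ω₀ ⬝ᵥ v s = u s := by
  classical
  set W : Submodule ℝ (ι → ℝ) := Submodule.span ℝ (Set.range v) with hW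
  obtain ⟨W', hc⟩ := Submodule.exists_isCompl W
  let proj : (ι → ℝ) →ₗ[ℝ] W := Submodule.linearProjOfIsCompl W W' hc
  let b : Module.Basis κ ℝ W := Module.Basis.span hv
  let φ : W →ₗ[ℝ] ℝ := b.constr ℝ u
  let Φ : (ι → ℝ) →ₗ[ℝ] ℝ := φ.comp proj
  have hΦ : ∀ y : ι → ℝ, (fun j => Φ (Pi.single j (1:ℝ))) ⬝ᵥ y = Φ y := by
    intro y
    have hrep : y = ∑ j, (y j) • (Pi.single j (1:ℝ) : ι → ℝ) := by
      funext i
      rw [Finset.sum_apply]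
      simp [Pi.single_apply]
    calc (fun j => Φ (Pi.single j (1:ℝ))) ⬝ᵥ y
        = ∑ j, (y j) * Φ (Pi.single j (1:ℝ)) := by
          simp [dotProduct, mul_comm]
      _ = Φ (∑ j, (y j) • (Pi.single j (1:ℝ) : ι → ℝ)) := by
          rw [map_sum]; simp [Φ]
      _ = Φ y := by rw [← hrep]
  refine ⟨fun j => Φ (Pi.single j 1), fun s => ?_⟩
  rw [hΦ]
  have hmem : v s ∈ W := Submodule.subset_span (Set.mem_range_self s)
  have hproj : proj (v s) = ⟨v s, hmem⟩ :=
    Submodule.linearProjOfIsCompl_apply_left hc ⟨v s, hmem⟩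
  have hb : b s = ⟨v s, hmem⟩ := by
    apply Subtype.ext
    exact congrArg Subtype.val (Module.Basis.span_apply hv s)
  show φ (proj (v s)) = u s
  rw [hproj, ← hb]
  simp [φ, Module.Basis.constr_basis]

/-- If `D = (f₁, …, f_{d₀})` with `D⁽¹⁾ = (f₁, …, f_{d₀}, g₁, …, g_{r₀})` of constant
ranks, the structure functions satisfy `[fᵢ, fⱼ] = Σₖ cᵏᵢⱼ gₖ mod D`, and `D` has
constant Engel rank `1` with `d₀ ≥ 4`, then the quadratic Plücker-type identities
hold among the structure functions. -/
theorem stmt17 {ι : Type} [Fintype ι] (D : Distr ι) (d₀ r₀ : ℕ)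
    (hd0 : 4 ≤ d₀) (hr0 : 1 ≤ r₀)
    (f : Fin d₀ → VF ι) (g : Fin r₀ → VF ι)
    (hDspan : D = Submodule.span ((ι → ℝ) → ℝ) (Set.range f))
    (hD1span : derived D 1 = Submodule.span ((ι → ℝ) → ℝ) (Set.range f ∪ Set.range g))
    (h0 : ∀ p : ι → ℝ, Module.finrank ℝ (fiber (derived D 0) p) = d₀)
    (h1 : ∀ p : ι → ℝ, Module.finrank ℝ (fiber (derived D 1) p) = d₀ + r₀)
    (cf : Fin d₀ → Fin d₀ → Fin r₀ → ((ι → ℝ) → ℝ))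
    (hcf : ∀ i j : Fin d₀, lieB (f i) (f j) - (∑ k : Fin r₀, cf i j k • g k) ∈ D)
    -- Engel rank ≤ 1 : `(dω)² ≡ 0 mod D⊥` for every annihilating 1-form `ω`
    (hEngelLe : ∀ ω : (ι → ℝ) → (ι → ℝ), Annihilates ω D →
      ∀ X₁ ∈ D, ∀ X₂ ∈ D, ∀ X₃ ∈ D, ∀ X₄ ∈ D, ∀ x : ι → ℝ,
        dOm ω X₁ X₂ x * dOm ω X₃ X₄ x - dOm ω X₁ X₃ x * dOm ω X₂ X₄ x
          + dOm ω X₁ X₄ x * dOm ω X₂ X₃ x = 0)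
    -- Engel rank ≥ 1 at every point
    (hEngelGe : ∀ x : ι → ℝ, ∃ ω : (ι → ℝ) → (ι → ℝ), Annihilates ω D ∧
      ∃ X ∈ D, ∃ Y ∈ D, dOm ω X Y x ≠ 0) :
    ∀ i j k l : Fin d₀, i < j → j < k → k < l →
      ∀ (p q : Fin r₀) (x : ι → ℝ),
        cf i j p x * cf k l q x - cf i k p x * cf j l q x + cf i l p x * cf j k q x
          + cf j k p x * cf i l q x - cf j l p x * cf i k q x
          + cf k l p x * cf i j q x = 0 := by
  classical
  intro i j k l hij hjk hkl p q x
  -- basic memberships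
  have hfD : ∀ a, f a ∈ D := by
    intro a; rw [hDspan]; exact Submodule.subset_span ⟨a, rfl⟩
  have hfD1 : ∀ a, f a ∈ derived D 1 := by
    intro a; rw [hD1span]; exact Submodule.subset_span (Or.inl ⟨a, rfl⟩)
  have hgD1 : ∀ m, g m ∈ derived D 1 := by
    intro m; rw [hD1span]; exact Submodule.subset_span (Or.inr ⟨m, rfl⟩)
  -- the values at x are linearly independent
  set v : Fin d₀ ⊕ Fin r₀ → (ι → ℝ) :=
    Sum.elim (fun a => f a x) (fun m => g m x) with hv
  have hfib : fiber (derived D 1) x = Submodule.span ℝ (Set.range v) := by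
    apply le_antisymm
    · rw [fiber, fiberS]
      apply Submodule.span_le.2
      rintro w ⟨h, hh, rfl⟩
      rw [hD1span] at hh
      induction hh using Submodule.span_induction with
      | mem z hz =>
        rcases hz with ⟨a, rfl⟩ | ⟨m, rfl⟩
        · exact Submodule.subset_span ⟨Sum.inl a, rfl⟩
        · exact Submodule.subset_span ⟨Sum.inr m, rfl⟩
      | zero => exact Submodule.zero_mem _
      | add y z hy hz hy' hz' => exact Submodule.add_mem _ hy' hz'
      | smul c y hy hy' => exact Submodule.smul_mem _ (c x) hy'
    · apply Submodule.span_le.2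
      rintro w ⟨s, rfl⟩
      cases s with
      | inl a => exact Submodule.subset_span ⟨f a, hfD1 a, rfl⟩
      | inr m => exact Submodule.subset_span ⟨g m, hgD1 m, rfl⟩
  have hli : LinearIndependent ℝ v := by
    rw [linearIndependent_iff_card_eq_finrank_span]
    have : Set.finrank ℝ (Set.range v) = d₀ + r₀ := by
      rw [Set.finrank, ← hfib]
      exact h1 x
    rw [this]
    simp
  -- the key quadratic identity, for every covector weight w
  have key : ∀ w : Fin r₀ → ℝ,
      (∑ m, cf i j m x * w m) * (∑ m, cf k l m x * w m)
        - (∑ m, cf i k m x * w m) * (∑ m, cf j l m x * w m)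
        + (∑ m, cf i l m x * w m) * (∑ m, cf j k m x * w m) = 0 := by
    intro w
    obtain ⟨ω₀, hω₀⟩ := aux_exists_cov v hli (Sum.elim (fun _ => 0) w)
    have hω₀f : ∀ a, ω₀ ⬝ᵥ f a x = 0 := fun a => hω₀ (Sum.inl a)
    have hω₀g : ∀ m, ω₀ ⬝ᵥ g m x = w m := fun m => hω₀ (Sum.inr m)
    set ω : (ι → ℝ) → (ι → ℝ) :=
      fun y => if ∀ a, ω₀ ⬝ᵥ f a y = 0 then ω₀ else 0 with hωdef
    have hωf : ∀ a y, ω y ⬝ᵥ f a y = 0 := by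
      intro a y
      by_cases h : ∀ a', ω₀ ⬝ᵥ f a' y = 0
      · rw [hωdef]; simp only [if_pos h]; exact h a
      · rw [hωdef]; simp only [if_neg h]; exact zero_dotProduct _
    have hωx : ω x = ω₀ := by
      rw [hωdef]; simp only [if_pos hω₀f]
    have hAnn : Annihilates ω D := by
      intro h hh
      rw [hDspan] at hh
      induction hh using Submodule.span_induction with
      | mem z hz =>
        rcases hz with ⟨a, rfl⟩
        exact fun y => hωf a y
      | zero => intro y; exact dotProduct_zero _
      | add y z hy hz hy' hz' =>
        intro s
        have : ω s ⬝ᵥ (y s + z s) = ω s ⬝ᵥ y s + ω s ⬝ᵥ z s :=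
          dotProduct_add _ _ _
        simpa [hy' s, hz' s] using this
      | smul c y hy hy' =>
        intro s
        have : ω s ⬝ᵥ (c s • y s) = c s • (ω s ⬝ᵥ y s) :=
          dotProduct_smul _ _ _
        simpa [hy' s] using this
    have hdOm : ∀ X, X ∈ D → ∀ Y, Y ∈ D →
        dOm ω X Y x = -(ω x ⬝ᵥ lieB X Y x) := by
      intro X hX Y hY
      have hX0 : (fun y => ω y ⬝ᵥ X y) = fun _ => (0:ℝ) := funext fun y => hAnn X hX y
      have hY0 : (fun y => ω y ⬝ᵥ Y y) = fun _ => (0:ℝ) := funext fun y => hAnn Y hY y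
      rw [dOm, hX0, hY0, fderiv_fun_const]
      simp
    have hval : ∀ a b : Fin d₀,
        dOm ω (f a) (f b) x = -(∑ m, cf a b m x * w m) := by
      intro a b
      rw [hdOm (f a) (hfD a) (f b) (hfD b)]
      congr 1
      have hsplit : lieB (f a) (f b) x
          = (lieB (f a) (f b) - ∑ m, cf a b m • g m) x + (∑ m, cf a b m • g m) x := by
        simp
      rw [hsplit, dotProduct_add, hAnn _ (hcf a b) x, zero_add]
      have hsum : (∑ m, cf a b m • g m) x = ∑ m, cf a b m x • g m x := by
        rw [Finset.sum_apply]; rfl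
      have hsum2 : ∀ m, cf a b m x • g m x = cf a b m x • g m x := fun _ => rfl
      rw [hsum]
      have := aux_dot_sum (ω x) (fun m => cf a b m x) (fun m => g m x)
      rw [this]
      rw [hωx]
      simp only [hω₀g]
    have := hEngelLe ω hAnn (f i) (hfD i) (f j) (hfD j) (f k) (hfD k) (f l) (hfD l) x
    rw [hval i j, hval k l, hval i k, hval j l, hval i l, hval j k] at this
    linear_combination this
  have h1' := key (Pi.single p 1)
  have h2' := key (Pi.single q 1)
  have h3' := key (Pi.single p 1 + Pi.single q 1)
  simp only [Pi.add_apply, Pi.single_apply, mul_ite, mul_one, mul_zero, mul_add,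
    Finset.sum_add_distrib, Finset.sum_ite_eq', Finset.mem_univ, if_true] at h1' h2' h3'
  linear_combination h3' - h1' - h2'


end
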